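/- Let n be an odd positive integer and N₀ ~ Binomial(n, 1/2). Define θ₁ = N₀/n − 1/2 if N₀ ≤ n/2 and θ₁ = 1 − n/(2N₀) otherwise. Then E[θ₁] = 2^{−n} ∑_{i=0}^{⌊n/2⌋} C(n,i) · i(n − 2i) / (2n(n − i)). -/

import Mathlib

/-!
Under Binomial(n, 1/2) the counts `i` and `n - i` carry the same weight `C(n,i) / 2^n`. For odd
`n` exactly one count of each pair `{i, n - i}` lies below `n / 2`, so the expectation is a sum
over `i ≤ ⌊n/2⌋` of `C(n,i) / 2^n · (θ(i) + θ(n - i))`, and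
`θ(i) + θ(n - i) = i/n + 1/2 - n/(2(n - i)) = i(n - 2i) / (2n(n - i))`.
-/

open MeasureTheory

/-- The empirical minimizer of the non-smooth counterexample, as a function of the count
N₀ of zero-valued samples among n observations. -/
noncomputable def exampleMinimizer (n : ℕ) (k : Fin (n + 1)) : ℝ :=
  if 2 * (k : ℕ) ≤ n then (k : ℝ) / n - 1 / 2 else 1 - n / (2 * (k : ℝ))

set_option linter.deprecated false

open Finset

theorem PMF.toReal_binomial_half_apply (n : ℕ) (k : Fin (n + 1)) :
    (PMF.binomial (1 / 2) (by norm_num) n k).toReal = n.choose k / 2 ^ n := by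
  have hk : (k : ℕ) ≤ n := Nat.lt_succ_iff.1 k.2
  have h_half : (1 : ENNReal) - ((1 / 2 : NNReal) : ENNReal) = ((1 / 2 : NNReal) : ENNReal) := by
    rw [← ENNReal.coe_one, ← ENNReal.coe_sub]; norm_num
  rw [PMF.binomial_apply, Fin.val_last, h_half, ← pow_add, Nat.add_sub_cancel' hk]
  simp [div_eq_inv_mul]

theorem PMF.integral_binomial_half (n : ℕ) (f : ℕ → ℝ) :
    ∫ k, f k ∂(PMF.binomial (1 / 2) (by norm_num) n).toMeasure =
      (2 ^ n : ℝ)⁻¹ * ∑ j ∈ range (n + 1), n.choose j * f j := by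
  rw [PMF.integral_eq_sum, mul_sum, ← Fin.sum_univ_eq_sum_range]
  refine sum_congr rfl fun k _ => ?_
  rw [PMF.toReal_binomial_half_apply, smul_eq_mul]
  ring

theorem Finset.sum_range_two_mul_add_two_eq_sum_reflect_pairs {M : Type*} [AddCommMonoid M]
    (f : ℕ → M) (m : ℕ) :
    ∑ j ∈ range (2 * m + 2), f j = ∑ i ∈ range (m + 1), (f i + f (2 * m + 1 - i)) := by
  rw [show 2 * m + 2 = (m + 1) + (m + 1) by ring, sum_range_add, sum_add_distrib,
    ← sum_range_reflect (fun j => f (m + 1 + j))]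
  refine congrArg _ (sum_congr rfl fun i hi => ?_)
  rw [mem_range] at hi
  congr 1
  omega

/-- `exampleMinimizer` with the count in `ℕ`, so that it can be evaluated at the reflected
count `n - i`. -/
noncomputable def countMinimizer (n j : ℕ) : ℝ :=
  if 2 * j ≤ n then (j : ℝ) / n - 1 / 2 else 1 - n / (2 * (j : ℝ))

theorem exampleMinimizer_eq_countMinimizer (n : ℕ) :
    exampleMinimizer n = fun k : Fin (n + 1) => countMinimizer n k := rfl

theorem countMinimizer_add_reflect {n i : ℕ} (hi : 2 * i < n) :
    countMinimizer n i + countMinimizer n (n - i) = i * (n - 2 * i) / (2 * n * (n - i)) := by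
  have hin : i < n := by omega
  have hn : (0 : ℝ) < n := by exact_mod_cast hi.pos
  rw [countMinimizer, countMinimizer, if_pos hi.le, if_neg (by omega), Nat.cast_sub hin.le]
  have : (0 : ℝ) < n - i := sub_pos.2 (by exact_mod_cast hin)
  field_simp
  ring

/-- for odd n and N₀ ~ Binomial(n, 1/2),
E[θ₁] = 2^{−n} ∑_{i=0}^{⌊n/2⌋} C(n,i)·i(n − 2i)/(2n(n − i)). -/
theorem example_minimizer_bias (n : ℕ) (hodd : Odd n) :
    ∫ k, exampleMinimizer n k
        ∂((PMF.binomial (1 / 2) (by norm_num) n).toMeasure) =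
      ((2 : ℝ) ^ n)⁻¹ * ∑ i ∈ Finset.range (n / 2 + 1),
        (n.choose i : ℝ) * ((i : ℝ) * ((n : ℝ) - 2 * i)) /
          (2 * n * ((n : ℝ) - i)) := by
  obtain ⟨m, rfl⟩ := hodd
  rw [exampleMinimizer_eq_countMinimizer, PMF.integral_binomial_half,
    sum_range_two_mul_add_two_eq_sum_reflect_pairs, show (2 * m + 1) / 2 = m by omega]
  congr 1
  refine sum_congr rfl fun i hi => ?_
  have hi : 2 * i < 2 * m + 1 := by rw [mem_range] at hi; omega
  rw [Nat.choose_symm (by omega : i ≤ 2 * m + 1), ← mul_add, countMinimizer_add_reflect hi,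
    ← mul_div_assoc]
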